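/- For every real z > 0 and every natural number j ≥ 1, one has T_j(z) = (√π / (j! · 2^{j+1/2})) · z^{1/4 − j/2} · J_{j−1/2}(√z), where J_ν(w) := Σ_{k=0}^∞ (−1)^k (w/2)^{ν+2k} / (k! · Γ(ν+k+1)) is the Bessel function of the first kind of order ν defined by this convergent series (Γ denoting the Gamma function). -/
import Mathlib


open Real

/-- `T_j(z) = Σ_{k=0}^∞ (−z)^k / (2j+2k)! · C(j+k, j)`. -/
noncomputable def T (j : ℕ) (z : ℝ) : ℝ :=
  ∑' k : ℕ, (-z) ^ k / (Nat.factorial (2 * j + 2 * k)) * (Nat.choose (j + k) j)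

/-- The Bessel function of the first kind `J_ν(w)`, defined by its series
`J_ν(w) = Σ_{k=0}^∞ (−1)^k (w/2)^{ν+2k} / (k! Γ(ν+k+1))` (real powers). -/
noncomputable def besselJ (ν w : ℝ) : ℝ :=
  ∑' k : ℕ, (-1) ^ k * (w / 2) ^ (ν + 2 * k) / (Nat.factorial k * Real.Gamma (ν + k + 1))

lemma gamma_nat_add_half (m : ℕ) :
    Real.Gamma ((m : ℝ) + 1 / 2) =
      Real.sqrt π * (Nat.factorial (2 * m)) / (4 ^ m * Nat.factorial m) := by
  induction m with
  | zero =>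
    rw [show ((0:ℕ):ℝ) + 1/2 = 1/2 by norm_num, Real.Gamma_one_half_eq]; simp
  | succ n ih =>
    have h : ((n : ℝ) + 1) + 1 / 2 = ((n : ℝ) + 1 / 2) + 1 := by ring
    push_cast
    rw [h, Real.Gamma_add_one (by positivity), ih]
    have h2 : 2 * (n + 1) = (2 * n + 1) + 1 := by ring
    rw [h2, Nat.factorial_succ, Nat.factorial_succ, Nat.factorial_succ]
    push_cast
    field_simp
    ring

/-- For `z > 0` and `j ≥ 1`,
`T_j(z) = (√π / (j! 2^{j+1/2})) z^{1/4 − j/2} J_{j−1/2}(√z)`. -/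
theorem T_eq_besselJ (z : ℝ) (hz : 0 < z) (j : ℕ) (hj : 1 ≤ j) :
    T j z = Real.sqrt π / (Nat.factorial j * (2 : ℝ) ^ ((j : ℝ) + 1 / 2)) *
      z ^ ((1 : ℝ) / 4 - (j : ℝ) / 2) * besselJ ((j : ℝ) - 1 / 2) (Real.sqrt z) := by
  rw [besselJ, ← tsum_mul_left, T]
  refine tsum_congr fun k => ?_
  have hsqrt : Real.sqrt z = z ^ ((1:ℝ)/2) := Real.sqrt_eq_rpow z
  have hgamma : ((j : ℝ) - 1 / 2) + k + 1 = ((j + k : ℕ) : ℝ) + 1 / 2 := by push_cast; ring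
  rw [hgamma, gamma_nat_add_half]
  rw [Real.div_rpow (Real.sqrt_nonneg z) (by norm_num), hsqrt, ← Real.rpow_mul hz.le]
  have hπ : (0:ℝ) < Real.sqrt π := Real.sqrt_pos.mpr Real.pi_pos
  have h2a : (2:ℝ) ^ ((j:ℝ) + 1/2) * (2:ℝ) ^ (((j:ℝ) - 1/2) + 2*(k:ℝ)) =
      (2:ℝ) ^ (2*j + 2*k : ℕ) := by
    rw [← Real.rpow_add (by norm_num), ← Real.rpow_natCast]
    push_cast; ring_nf
  have hza : z ^ ((1:ℝ)/4 - (j:ℝ)/2) * z ^ ((1:ℝ)/2 * (((j:ℝ) - 1/2) + 2*(k:ℝ))) =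
      z ^ (k : ℕ) := by
    rw [← Real.rpow_add hz, ← Real.rpow_natCast]
    congr 1; ring
  have hfact : ((Nat.factorial (j + k) : ℕ) : ℝ) =
      (Nat.choose (j + k) j : ℝ) * (Nat.factorial j) * (Nat.factorial k) := by
    have h := Nat.choose_mul_factorial_mul_factorial (Nat.le_add_right j k)
    rw [Nat.add_sub_cancel_left] at h
    exact_mod_cast h.symm
  have h4 : (4:ℝ) ^ (j + k) = (2:ℝ) ^ (2*j + 2*k : ℕ) := by
    rw [show (4:ℝ) = 2^2 by norm_num, ← pow_mul]; ring_nf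
  have hf2 : (2 * (j + k)) = 2*j + 2*k := by ring
  have h2pos : (0:ℝ) < (2:ℝ) ^ ((j:ℝ) + 1/2) := Real.rpow_pos_of_pos (by norm_num) _
  have h2pos' : (0:ℝ) < (2:ℝ) ^ (((j:ℝ) - 1/2) + 2*(k:ℝ)) := Real.rpow_pos_of_pos (by norm_num) _
  have hupos : (0:ℝ) < z ^ ((1:ℝ)/4 - (j:ℝ)/2) := Real.rpow_pos_of_pos hz _
  have hvpos : (0:ℝ) < z ^ ((1:ℝ)/2 * (((j:ℝ) - 1/2) + 2*(k:ℝ))) := Real.rpow_pos_of_pos hz _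
  have hfac1 : (0:ℝ) < (Nat.factorial j : ℝ) := by exact_mod_cast Nat.factorial_pos j
  have hfac2 : (0:ℝ) < (Nat.factorial k : ℝ) := by exact_mod_cast Nat.factorial_pos k
  have hfac3 : (0:ℝ) < (Nat.factorial (2*j+2*k) : ℝ) := by exact_mod_cast Nat.factorial_pos _
  rw [hf2, h4, ← h2a, hfact, neg_pow, ← hza]
  field_simp
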